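/- arXiv:1204.1563 — 3 statements merged into one kernel-verified Lean document; each statement's English description precedes it below -/
import Mathlib

section
/- Let p be the uniform distribution on [m] = {1,...,m} and let ε ∈ (0, 1/2). Among all probability mass functions q on [m] with total variation distance d_TV(q,p) ≥ ε, the bi-uniform distribution q* defined by q*_j = 1/m + ε/⌊m/2⌋ for j ≤ ⌊m/2⌋ and q*_j = 1/m − ε/⌈m/2⌉ for j > ⌊m/2⌋ satisfies d_TV(q*,p) = ε, and for even m it achieves the infimum of Σ_j q_j²/p_j = m Σ_j q_j², with optimal value m Σ_j (q*_j)² = 1 + 4ε². -/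
/-!
Writing `q = p + d` with `∑ d = 0` gives `m ∑ q² = 1 + m ∑ d²`, and Cauchy–Schwarz bounds
`m ∑ d²` below by `(∑ |d|)² = (2 d_TV(q, p))² ≥ 4ε²`. Equality holds in Cauchy–Schwarz when
`|d_j|` is constant, which is the case for the bi-uniform `q*`.
-/

open Finset

theorem Fin.sum_ite_val_lt_two_mul {M : Type*} [AddCommMonoid M] (k : ℕ) (a b : M) :
    ∑ j : Fin (2 * k), (if (j : ℕ) < k then a else b) = k • (a + b) := by
  rw [Fin.sum_univ_eq_sum_range (fun i => if i < k then a else b), two_mul, sum_range_add]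
  simp +contextual [sum_ite_of_true]

section UniformCentered

variable {ι : Type*} [Fintype ι]

theorem card_mul_sum_sq_eq_one_add_card_mul_sum_sq_sub {q : ι → ℝ} (hq : ∑ j, q j = 1) :
    (Fintype.card ι : ℝ) * ∑ j, q j ^ 2 =
      1 + Fintype.card ι * ∑ j, (q j - 1 / Fintype.card ι) ^ 2 := by
  have hn : (Fintype.card ι : ℝ) ≠ 0 := by
    have : Nonempty ι := by
      by_contra h
      simp [not_nonempty_iff.mp h] at hq
    positivity
  simp only [sub_sq, sum_add_distrib, sum_sub_distrib, ← mul_sum, ← sum_mul, hq, sum_const,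
    card_univ, nsmul_eq_mul]
  field_simp
  ring

theorem one_add_sq_sum_abs_sub_le_card_mul_sum_sq {q : ι → ℝ} (hq : ∑ j, q j = 1) :
    1 + (∑ j, |q j - 1 / Fintype.card ι|) ^ 2 ≤ Fintype.card ι * ∑ j, q j ^ 2 := by
  rw [card_mul_sum_sq_eq_one_add_card_mul_sum_sq_sub hq]
  simpa [sq_abs] using
    sq_sum_le_card_mul_sum_sq (s := univ) (f := fun j => |q j - 1 / Fintype.card ι|)

theorem card_mul_sum_sq_of_abs_sub_eq {q : ι → ℝ} (hq : ∑ j, q j = 1) {δ : ℝ}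
    (hδ : ∀ j, |q j - 1 / Fintype.card ι| = δ) :
    Fintype.card ι * ∑ j, q j ^ 2 = 1 + (Fintype.card ι * δ) ^ 2 := by
  simp only [card_mul_sum_sq_eq_one_add_card_mul_sum_sq_sub hq, ← sq_abs (q _ - _), hδ, sum_const,
    card_univ, nsmul_eq_mul]
  ring

end UniformCentered

theorem biuniform_minimizes_chi_square_small_eps_general
    (m : ℕ) (hm : 0 < m) (hme : 2 ∣ m) (ε : ℝ) (hε0 : 0 < ε)
    (qstar : Fin m → ℝ)
    (hqstar : ∀ j : Fin m, qstar j =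
      if (j : ℕ) < m / 2 then 1/(m:ℝ) + ε/((m/2 : ℕ) : ℝ)
      else 1/(m:ℝ) - ε/((m/2 : ℕ) : ℝ)) :
    (1/2) * ∑ j, |qstar j - 1/(m:ℝ)| = ε ∧
    (m : ℝ) * ∑ j, (qstar j)^2 = 1 + 4*ε^2 ∧
    ∀ q : Fin m → ℝ, (∀ j, 0 ≤ q j) → ∑ j, q j = 1 →
      ε ≤ (1/2) * ∑ j, |q j - 1/(m:ℝ)| →
      1 + 4*ε^2 ≤ (m:ℝ) * ∑ j, (q j)^2 := by
  obtain ⟨k, rfl⟩ := hme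
  have hk : (0 : ℝ) < k := by exact_mod_cast (by omega : 0 < k)
  have hdiv : 2 * k / 2 = k := by omega
  simp only [hdiv] at hqstar
  have hdev : ∀ j, |qstar j - 1 / Fintype.card (Fin (2 * k))| = ε / k := by
    intro j
    rw [Fintype.card_fin, hqstar]
    split_ifs <;> simp [abs_of_pos (div_pos hε0 hk)]
  have hsum : ∑ j, qstar j = 1 := by
    simp only [hqstar, Fin.sum_ite_val_lt_two_mul, nsmul_eq_mul]
    push_cast
    field_simp
    ring
  refine ⟨?_, ?_, fun q _ hq hTV => ?_⟩
  · simp only [Fintype.card_fin] at hdev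
    simp only [hdev, sum_const, card_univ, Fintype.card_fin, nsmul_eq_mul]
    push_cast
    field_simp
  · have hval := card_mul_sum_sq_of_abs_sub_eq hsum hdev
    rw [Fintype.card_fin] at hval
    rw [hval]
    push_cast
    field_simp
    ring
  · have hCS := one_add_sq_sum_abs_sub_le_card_mul_sum_sq hq
    simp only [Fintype.card_fin] at hCS
    nlinarith

/-- for uniform `p` on `[m]`, `ε ∈ (0,1/2)`, the bi-uniform distribution `q*`
has total variation distance exactly `ε` from `p`, and (for even `m`) minimizes
`m * Σ q_j²` over all pmfs at TV distance at least `ε`, with value `1 + 4ε²`. -/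
theorem biuniform_minimizes_chi_square_small_eps
    (m : ℕ) (hm : 0 < m) (hme : 2 ∣ m) (ε : ℝ) (hε0 : 0 < ε) (hε : ε < 1/2)
    (qstar : Fin m → ℝ)
    (hqstar : ∀ j : Fin m, qstar j =
      if (j : ℕ) < m / 2 then 1/(m:ℝ) + ε/((m/2 : ℕ) : ℝ)
      else 1/(m:ℝ) - ε/((m/2 : ℕ) : ℝ)) :
    (1/2) * ∑ j, |qstar j - 1/(m:ℝ)| = ε ∧
    (m : ℝ) * ∑ j, (qstar j)^2 = 1 + 4*ε^2 ∧
    ∀ q : Fin m → ℝ, (∀ j, 0 ≤ q j) → ∑ j, q j = 1 →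
      ε ≤ (1/2) * ∑ j, |q j - 1/(m:ℝ)| →
      1 + 4*ε^2 ≤ (m:ℝ) * ∑ j, (q j)^2 :=
  biuniform_minimizes_chi_square_small_eps_general m hm hme ε hε0 qstar hqstar
end

section
/- Any minimizer q* of Σ_{j=1}^m q_j²/p_j over probability mass functions q on [m] with d_TV(q,p) ≥ ε (p uniform) is bi-uniform: q* takes at most two distinct values, one common value on the set J₊ = {j : q*_j ≥ 1/m} and another common value on J₋ = {j : q*_j < 1/m}. -/
/-! Replacing two coordinates of `q` that lie on the same side of `1/m` by their mean keeps `q` a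
pmf and leaves `∑ |q j - 1/m|` unchanged, since `|· - 1/m|` is affine on each side; by strict
convexity of the square it lowers `∑ q j ^ 2` unless the two coordinates already agree. -/

section AveragePair

variable {ι : Type*} [DecidableEq ι]

noncomputable def averagePair (q : ι → ℝ) (j j' : ι) : ι → ℝ :=
  Function.update (Function.update q j ((q j + q j') / 2)) j' ((q j + q j') / 2)

variable {q : ι → ℝ} {j j' : ι}

lemma averagePair_apply_of_ne {i : ι} (hj : i ≠ j) (hj' : i ≠ j') :
    averagePair q j j' i = q i := by
  simp [averagePair, hj, hj']

lemma averagePair_nonneg (hq : ∀ i, 0 ≤ q i) (i : ι) : 0 ≤ averagePair q j j' i := by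
  unfold averagePair
  have := hq j; have := hq j'
  rcases eq_or_ne i j' with rfl | h'
  · simp only [Function.update_self]; positivity
  rcases eq_or_ne i j with rfl | h
  · simp only [Function.update_of_ne h', Function.update_self]; positivity
  · simpa [h, h'] using hq i

variable [Fintype ι]

lemma sum_comp_averagePair (hjj : j ≠ j') (g : ℝ → ℝ) :
    ∑ i, g (averagePair q j j' i) + (g (q j) + g (q j')) =
      ∑ i, g (q i) + 2 * g ((q j + q j') / 2) := by
  have hoff : ∀ i ∈ ({j, j'} : Finset ι)ᶜ, g (averagePair q j j' i) = g (q i) := by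
    intro i hi
    simp only [Finset.mem_compl, Finset.mem_insert, Finset.mem_singleton, not_or] at hi
    rw [averagePair_apply_of_ne hi.1 hi.2]
  rw [← Finset.sum_add_sum_compl {j, j'}, ← Finset.sum_add_sum_compl {j, j'},
    Finset.sum_pair hjj, Finset.sum_pair hjj, Finset.sum_congr rfl hoff]
  simp only [averagePair, Function.update_self, Function.update_of_ne hjj]
  ring

lemma sum_averagePair (hjj : j ≠ j') : ∑ i, averagePair q j j' i = ∑ i, q i := by
  have := sum_comp_averagePair (q := q) hjj id
  simp only [id] at this
  linarith

lemma sum_sq_averagePair_lt (hjj : j ≠ j') (hne : q j ≠ q j') :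
    ∑ i, averagePair q j j' i ^ 2 < ∑ i, q i ^ 2 := by
  have hpair : 2 * ((q j + q j') / 2) ^ 2 < q j ^ 2 + q j' ^ 2 := by
    nlinarith [sq_pos_of_ne_zero (sub_ne_zero.mpr hne)]
  linarith [sum_comp_averagePair (q := q) hjj (· ^ 2)]

lemma two_mul_abs_mean_sub {a b c : ℝ} (hside : (c ≤ a ∧ c ≤ b) ∨ (a ≤ c ∧ b ≤ c)) :
    2 * |(a + b) / 2 - c| = |a - c| + |b - c| := by
  rcases hside with ⟨ha, hb⟩ | ⟨ha, hb⟩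
  · rw [abs_of_nonneg (by linarith), abs_of_nonneg (by linarith), abs_of_nonneg (by linarith)]
    ring
  · rw [abs_of_nonpos (by linarith), abs_of_nonpos (by linarith), abs_of_nonpos (by linarith)]
    ring

lemma sum_abs_sub_averagePair (hjj : j ≠ j') {c : ℝ}
    (hside : (c ≤ q j ∧ c ≤ q j') ∨ (q j ≤ c ∧ q j' ≤ c)) :
    ∑ i, |averagePair q j j' i - c| = ∑ i, |q i - c| := by
  linarith [sum_comp_averagePair (q := q) hjj (|· - c|), two_mul_abs_mean_sub hside]

end AveragePair

theorem minimizer_is_biuniform_general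
    (m : ℕ) (ε : ℝ)
    (q : Fin m → ℝ) (hq0 : ∀ j, 0 ≤ q j) (hq1 : ∑ j, q j = 1)
    (hqd : ε ≤ (1/2) * ∑ j, |q j - 1/(m:ℝ)|)
    (hmin : ∀ r : Fin m → ℝ, (∀ j, 0 ≤ r j) → ∑ j, r j = 1 →
      ε ≤ (1/2) * ∑ j, |r j - 1/(m:ℝ)| → ∑ j, (q j)^2 ≤ ∑ j, (r j)^2) :
    (∀ j j' : Fin m, 1/(m:ℝ) ≤ q j → 1/(m:ℝ) ≤ q j' → q j = q j') ∧
    (∀ j j' : Fin m, q j < 1/(m:ℝ) → q j' < 1/(m:ℝ) → q j = q j') := by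
  have same_side_eq : ∀ j j',
      (1/(m:ℝ) ≤ q j ∧ 1/(m:ℝ) ≤ q j') ∨ (q j ≤ 1/(m:ℝ) ∧ q j' ≤ 1/(m:ℝ)) → q j = q j' := by
    intro j j' hside
    by_contra hne
    have hjj : j ≠ j' := fun h => hne (congrArg q h)
    refine (sum_sq_averagePair_lt hjj hne).not_ge (hmin _ (averagePair_nonneg hq0) ?_ ?_)
    · rw [sum_averagePair hjj, hq1]
    · rwa [sum_abs_sub_averagePair hjj hside]
  exact ⟨fun j j' h h' => same_side_eq j j' (.inl ⟨h, h'⟩),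
    fun j j' h h' => same_side_eq j j' (.inr ⟨h.le, h'.le⟩)⟩

/-- any minimizer of `Σ q_j²/p_j` (with `p` uniform, so of `Σ q_j²`) over
pmfs with `d_TV(q,p) ≥ ε` is bi-uniform: it is constant on `{j : q_j ≥ 1/m}` and
constant on `{j : q_j < 1/m}`. -/
theorem minimizer_is_biuniform
    (m : ℕ) (hm : 0 < m) (ε : ℝ) (hε0 : 0 < ε) (hε1 : ε < 1)
    (q : Fin m → ℝ) (hq0 : ∀ j, 0 ≤ q j) (hq1 : ∑ j, q j = 1)
    (hqd : ε ≤ (1/2) * ∑ j, |q j - 1/(m:ℝ)|)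
    (hmin : ∀ r : Fin m → ℝ, (∀ j, 0 ≤ r j) → ∑ j, r j = 1 →
      ε ≤ (1/2) * ∑ j, |r j - 1/(m:ℝ)| → ∑ j, (q j)^2 ≤ ∑ j, (r j)^2) :
    (∀ j j' : Fin m, 1/(m:ℝ) ≤ q j → 1/(m:ℝ) ≤ q j' → q j = q j') ∧
    (∀ j j' : Fin m, q j < 1/(m:ℝ) → q j' < 1/(m:ℝ) → q j = q j') :=
  minimizer_is_biuniform_general m ε q hq0 hq1 hqd hmin
end

section
/- For θ ∈ (0, 1/2] and x ≥ 0, the quantity t(x) = (1 − e^{−x})(e^{−θ} − 1) + ( x e^{−x} (e^{θ} − 1) )² is strictly decreasing in x on [0, ∞), with t(0) = 0; hence t(x) < 0 for all x > 0. -/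
/-! Writing `d = e^θ - 1`, so that `e^{-θ} - 1 = -e^{-θ} d`, the derivative factors as
`t'(x) = e^{-x} d (2x(1-x)e^{-x} d - e^{-θ})`. For `x > 0` we have `2x(1-x)e^{-x} < 1/2`, and
`d/2 ≤ e^{-θ}` amounts to `e^θ (e^θ - 1) ≤ 2`, i.e. `e^θ ≤ 2`; this holds since `θ ≤ 1/2 < log 2`. -/

open Real Set

noncomputable def t (θ x : ℝ) : ℝ :=
  (1 - exp (-x)) * (exp (-θ) - 1) + (x * exp (-x) * (exp θ - 1)) ^ 2

lemma hasDerivAt_t (θ x : ℝ) :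
    HasDerivAt (t θ)
      (exp (-x) * (exp θ - 1) * (2 * x * (1 - x) * exp (-x) * (exp θ - 1) - exp (-θ))) x := by
  have hexp : HasDerivAt (fun x => exp (-x)) (-exp (-x)) x := by
    simpa using (hasDerivAt_neg x).exp
  have := ((hexp.const_sub 1).mul_const (exp (-θ) - 1)).add
    ((((hasDerivAt_id x).mul hexp).mul_const (exp θ - 1)).pow 2)
  refine this.congr_deriv ?_
  simp only [Pi.mul_apply, id]
  rw [exp_neg θ]
  field_simp
  ring

lemma two_mul_mul_one_sub_mul_exp_neg_lt {x : ℝ} (hx : 0 < x) :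
    2 * x * (1 - x) * exp (-x) < 1 / 2 := by
  have hexp : exp (-x) < 1 := exp_lt_one_iff.mpr (neg_lt_zero.mpr hx)
  rcases le_or_gt (x * (1 - x)) 0 with hle | hpos
  · nlinarith [exp_pos (-x)]
  · nlinarith [sq_nonneg (2 * x - 1)]

lemma deriv_t_neg {θ x : ℝ} (hθ : 0 < θ) (hθ2 : exp θ ≤ 2) (hx : 0 < x) :
    deriv (t θ) x < 0 := by
  rw [(hasDerivAt_t θ x).deriv]
  have hd : 0 < exp θ - 1 := by linarith [add_one_lt_exp hθ.ne']
  have hhalf : (exp θ - 1) / 2 ≤ exp (-θ) := by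
    rw [exp_neg, ← one_div, le_div_iff₀ (exp_pos θ)]
    nlinarith
  have := two_mul_mul_one_sub_mul_exp_neg_lt hx
  refine mul_neg_of_pos_of_neg (by positivity) ?_
  nlinarith

lemma strictAntiOn_t {θ : ℝ} (hθ : 0 < θ) (hθ2 : exp θ ≤ 2) : StrictAntiOn (t θ) (Ici 0) := by
  refine strictAntiOn_of_deriv_neg (convex_Ici 0)
    (fun x _ => (hasDerivAt_t θ x).continuousAt.continuousWithinAt) fun x hx => ?_
  rw [interior_Ici] at hx
  exact deriv_t_neg hθ hθ2 hx

/-- for `θ ∈ (0,1/2]`, the function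
`t(x) = (1 − e^{−x})(e^{−θ} − 1) + (x e^{−x}(e^{θ} − 1))²` is strictly decreasing on
`[0,∞)` with `t(0) = 0`; hence `t(x) < 0` for all `x > 0`. -/
theorem t_strictAnti (θ : ℝ) (hθ0 : 0 < θ) (hθ1 : θ ≤ 1/2) :
    StrictAntiOn (fun x : ℝ =>
        (1 - Real.exp (-x)) * (Real.exp (-θ) - 1)
          + (x * Real.exp (-x) * (Real.exp θ - 1))^2) (Set.Ici 0) ∧
    (fun x : ℝ => (1 - Real.exp (-x)) * (Real.exp (-θ) - 1)
          + (x * Real.exp (-x) * (Real.exp θ - 1))^2) 0 = 0 ∧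
    ∀ x : ℝ, 0 < x →
      (1 - Real.exp (-x)) * (Real.exp (-θ) - 1)
          + (x * Real.exp (-x) * (Real.exp θ - 1))^2 < 0 := by
  have hθ2 : exp θ ≤ 2 :=
    (exp_le_exp.mpr (hθ1.trans (by linarith [log_two_gt_d9]))).trans_eq (exp_log two_pos)
  have hanti : StrictAntiOn (t θ) (Ici 0) := strictAntiOn_t hθ0 hθ2
  have hzero : t θ 0 = 0 := by simp [t]
  exact ⟨hanti, hzero, fun x hx => hzero ▸ hanti self_mem_Ici (le_of_lt hx) hx⟩
end
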